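/- For every disjunctive logic program D, every answer set of D is an answer set of D⁺, where D⁺ is obtained from D by moving all negated atoms of each rule's body to its head as additional disjuncts. -/
import Mathlib


/-- A disjunctive clause: head₁ ∨ … ∨ head_k ← pos, not(neg). -/
structure DClause where
  head : Finset ℕ
  pos : Finset ℕ
  neg : Finset ℕ
deriving DecidableEq

/-- N is a model of the Gelfond–Lifschitz reduct D^M. -/
def DReductModel (D : Finset DClause) (M N : Set ℕ) : Prop :=
  ∀ c ∈ D, (∀ a ∈ c.neg, a ∉ M) → (↑c.pos : Set ℕ) ⊆ N → ∃ a ∈ c.head, a ∈ N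

/-- M is an answer set of D: M is a minimal model of the reduct D^M. -/
def IsAnswerSet (D : Finset DClause) (M : Set ℕ) : Prop :=
  DReductModel D M M ∧ ∀ N : Set ℕ, N ⊆ M → DReductModel D M N → N = M

/-- D⁺: move the negated body atoms of every rule into the head. -/
def dplus (D : Finset DClause) : Finset DClause :=
  D.image fun c => ⟨c.head ∪ c.neg, c.pos, ∅⟩

/-- Every answer set of D is an answer set of D⁺. -/
theorem answerSet_dplus (D : Finset DClause) (M : Set ℕ)
    (h : IsAnswerSet D M) : IsAnswerSet (dplus D) M := by
  obtain ⟨hmod, hmin⟩ := h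
  constructor
  · intro c hc _ hpos
    obtain ⟨d, hd, rfl⟩ := Finset.mem_image.mp hc
    by_cases hneg : ∀ a ∈ d.neg, a ∉ M
    · obtain ⟨a, ha, haM⟩ := hmod d hd hneg hpos
      exact ⟨a, Finset.mem_union_left _ ha, haM⟩
    · push_neg at hneg
      obtain ⟨a, ha, haM⟩ := hneg
      exact ⟨a, Finset.mem_union_right _ ha, haM⟩
  · intro N hNM hN
    apply hmin N hNM
    intro c hc hneg hpos
    have hc' : (⟨c.head ∪ c.neg, c.pos, ∅⟩ : DClause) ∈ dplus D :=
      Finset.mem_image.mpr ⟨c, hc, rfl⟩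
    obtain ⟨a, ha, haN⟩ := hN _ hc' (by simp) hpos
    rcases Finset.mem_union.mp ha with h1 | h2
    · exact ⟨a, h1, haN⟩
    · exact absurd (hNM haN) (hneg a h2)
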